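/- Completeness of base-extension semantics for S5 with respect to the axiom system: every theorem of the multi-agent S5 Hilbert system (axioms 1–3, K, T, 4, 5, rules MP and NEC) is valid in the base-extension semantics for S5. -/

import Mathlib

/-!
Soundness is proved by induction on derivations, each axiom `χ → θ` being valid because `χ`
entails `θ` base by base. Monotonicity of validity along base extensions comes from the `zag`
condition. Double-negation elimination, needed for axiom 3, is the heart of the argument: for an
atom `p` that is not derivable, adjoining the rules `p ⇒ q` makes `¬p` valid without deriving
anything new; for `K a φ` one uses `zig` to transport a counter-base back along `R a`. Axiom 5
follows the same pattern.
-/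

/-- A base rule: a finite set of premiss atoms and a conclusion atom. -/
abbrev Rule := Finset ℕ × ℕ

/-- A base is a collection of base rules. -/
abbrev Base := Set Rule

/-- Derivability of an atom in a base: closure of ∅ under the rules. -/
inductive Deriv (B : Base) : ℕ → Prop where
  | step (L : Finset ℕ) (p : ℕ) (mem : (L, p) ∈ B)
      (prem : ∀ q ∈ L, Deriv B q) : Deriv B p

/-- A base is inconsistent iff every atom is derivable in it. -/
def Inconsistent (B : Base) : Prop := ∀ p : ℕ, Deriv B p

/-- Formulae of the multi-agent modal language over agents `A`. -/
inductive Form (A : Type) where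
  | atom : ℕ → Form A
  | bot  : Form A
  | imp  : Form A → Form A → Form A
  | K    : A → Form A → Form A

/-- Negation abbreviation ¬φ := φ → ⊥. -/
def Form.neg {A : Type} (φ : Form A) : Form A := Form.imp φ Form.bot

/-- Validity at a base given a family of relations on bases. -/
def Valid {A : Type} (R : A → Base → Base → Prop) : Base → Form A → Prop
  | B, .atom p => Deriv B p
  | B, .bot => ∀ p : ℕ, Deriv B p
  | B, .imp φ ψ => ∀ C : Base, B ⊆ C → Valid R C φ → Valid R C ψ
  | B, .K a φ => ∀ C : Base, R a B C → Valid R C φ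

/-- Validity of φ at ℬ from a (nonempty) set of assumptions Γ. -/
def GammaValid {A : Type} (R : A → Base → Base → Prop)
    (Γ : Set (Form A)) (B : Base) (φ : Form A) : Prop :=
  ∀ C : Base, B ⊆ C → (∀ ψ ∈ Γ, Valid R C ψ) → Valid R C φ

def Euclidean {X : Sort*} (r : X → X → Prop) : Prop :=
  ∀ x y z, r x y → r x z → r y z

/-- S5-modal relations on bases. -/
structure S5Rel (r : Base → Base → Prop) : Prop where
  incon_succ : ∀ B, Inconsistent B →
    (∃ C, r B C ∧ Inconsistent C) ∧ ∀ D, r B D → Inconsistent D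
  con_succ : ∀ B, ¬ Inconsistent B → ∀ C, r B C → ¬ Inconsistent C
  zig : ∀ B C, r B C → ∀ D, B ⊆ D → ¬ Inconsistent D → ∃ E, C ⊆ E ∧ r D E
  zag : ∀ B C, r B C → ¬ Inconsistent C → ∀ D, D ⊆ B → ∃ E, E ⊆ C ∧ r D E
  refl : ∀ B, r B B
  trans : ∀ B C D, r B C → r C D → r B D
  eucl : ∀ B C D, r B C → r B D → r C D

/-- Maximally-consistent bases. -/
def MaxCon (B : Base) : Prop :=
  ¬ Inconsistent B ∧ ∀ δ : Rule, δ ∈ B ∨ Inconsistent (insert δ B)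

/-- A formula is valid iff it is valid at every base for every family of S5-modal relations. -/
def ValidAll {A : Type} (φ : Form A) : Prop :=
  ∀ R : A → Base → Base → Prop, (∀ a, S5Rel (R a)) → ∀ B : Base, Valid R B φ

/-- Hilbert-style proof system for multi-agent S5. -/
inductive Prov {A : Type} : Form A → Prop where
  | ax1 (φ ψ : Form A) : Prov (φ.imp (ψ.imp φ))
  | ax2 (φ ψ χ : Form A) :
      Prov ((φ.imp (ψ.imp χ)).imp ((φ.imp ψ).imp (φ.imp χ)))
  | ax3 (φ ψ : Form A) : Prov ((φ.neg.imp ψ.neg).imp (ψ.imp φ))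
  | axK (a : A) (φ ψ : Form A) :
      Prov ((Form.K a (φ.imp ψ)).imp ((Form.K a φ).imp (Form.K a ψ)))
  | axT (a : A) (φ : Form A) : Prov ((Form.K a φ).imp φ)
  | ax4 (a : A) (φ : Form A) : Prov ((Form.K a φ).imp (Form.K a (Form.K a φ)))
  | ax5 (a : A) (φ : Form A) :
      Prov ((Form.K a φ).neg.imp (Form.K a (Form.K a φ).neg))
  | mp {φ ψ : Form A} : Prov (φ.imp ψ) → Prov φ → Prov ψ
  | nec (a : A) {φ : Form A} : Prov φ → Prov (Form.K a φ)

theorem Deriv.mono {B C : Base} (h : B ⊆ C) {p : ℕ} (d : Deriv B p) : Deriv C p := by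
  induction d with
  | step L p mem _ ih => exact Deriv.step L p (h mem) ih

theorem Inconsistent.mono {B C : Base} (h : B ⊆ C) (hB : Inconsistent B) : Inconsistent C :=
  fun p => (hB p).mono h

theorem S5Rel.symm {r : Base → Base → Prop} (hr : S5Rel r) {B C : Base} (h : r B C) : r C B :=
  hr.eucl B C B h (hr.refl B)

def explosion (p : ℕ) : Base := {r : Rule | r.1 = {p}}

theorem Deriv.of_union_explosion {B : Base} {p : ℕ} (hp : ¬ Deriv B p) {q : ℕ}
    (d : Deriv (B ∪ explosion p) q) : Deriv B q := by
  induction d with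
  | step L q mem _ ih =>
    rcases mem with hB | hL
    · exact Deriv.step L q hB ih
    · exact absurd (ih p (by rw [show L = {p} from hL]; exact Finset.mem_singleton_self p)) hp

section Validity

variable {A : Type} {R : A → Base → Base → Prop}

theorem Valid.of_inconsistent (hR : ∀ a, S5Rel (R a)) {B : Base} (hB : Inconsistent B)
    (φ : Form A) : Valid R B φ := by
  induction φ generalizing B with
  | atom p => exact hB p
  | bot => exact hB
  | imp φ ψ _ ihψ => exact fun C hBC _ => ihψ (hB.mono hBC)
  | K a φ ih => exact fun C hC => ih (((hR a).incon_succ B hB).2 C hC)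

theorem Valid.mono (hR : ∀ a, S5Rel (R a)) {φ : Form A} {B C : Base} (h : B ⊆ C)
    (hv : Valid R B φ) : Valid R C φ := by
  induction φ generalizing B C with
  | atom p => exact Deriv.mono h hv
  | bot => exact Inconsistent.mono h hv
  | imp φ ψ _ _ => exact fun D hCD => hv D (h.trans hCD)
  | K a φ ih =>
    intro E hCE
    by_cases hC : Inconsistent C
    · exact Valid.of_inconsistent hR (((hR a).incon_succ C hC).2 E hCE) φ
    · obtain ⟨E', hE'E, hBE'⟩ := (hR a).zag C E hCE ((hR a).con_succ C hC E hCE) B h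
      exact ih hE'E (hv E' hBE')

theorem Valid.mp {B : Base} {φ ψ : Form A} (hφψ : Valid R B (φ.imp ψ)) (hφ : Valid R B φ) :
    Valid R B ψ :=
  hφψ B subset_rfl hφ

theorem Valid.imp_of_entails {φ ψ : Form A} (h : ∀ C, Valid R C φ → Valid R C ψ) (B : Base) :
    Valid R B (φ.imp ψ) :=
  fun C _ => h C

theorem valid_neg_atom_union_explosion (B : Base) (p : ℕ) :
    Valid R (B ∪ explosion p) (Form.atom p : Form A).neg := by
  intro E hE hp q
  refine Deriv.step {p} q (hE (Or.inr rfl)) fun x hx => ?_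
  rwa [Finset.mem_singleton.mp hx]

theorem Valid.neg_K_of_rel {a : A} (hr : S5Rel (R a)) {φ : Form A} {D E : Base}
    (hDE : R a D E) (hnφ : Valid R D φ.neg) : Valid R E (Form.K a φ).neg := by
  intro F hEF hKφ
  by_contra hF
  obtain ⟨G, hDG, hFG⟩ := hr.zig E D (hr.symm hDE) F hEF hF
  exact hr.con_succ F hF G hFG (hnφ G hDG (hKφ G hFG))

theorem Valid.of_neg_neg (hR : ∀ a, S5Rel (R a)) {φ : Form A} {B : Base}
    (h : Valid R B φ.neg.neg) : Valid R B φ := by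
  induction φ generalizing B with
  | atom p =>
    by_contra hp
    exact hp <| Deriv.of_union_explosion hp <|
      h _ Set.subset_union_left (valid_neg_atom_union_explosion B p) p
  | bot => exact h B subset_rfl fun _ _ hC => hC
  | imp φ ψ _ ihψ =>
    intro C hBC hφ
    refine ihψ fun D hCD hnψ => h D (hBC.trans hCD) fun E hDE hφψ => hnψ E hDE ?_
    exact hφψ.mp (hφ.mono hR (hCD.trans hDE))
  | K a φ ih =>
    intro C hBC
    refine ih fun D hCD hnφ => ?_
    by_contra hD
    obtain ⟨E, hBE, hDE⟩ := (hR a).zig C B ((hR a).symm hBC) D hCD hD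
    exact (hR a).con_succ D hD E hDE (h E hBE (Valid.neg_K_of_rel (hR a) hDE hnφ))

theorem Valid.imp_intro (hR : ∀ a, S5Rel (R a)) {φ ψ : Form A} {B : Base}
    (h : Valid R B φ) : Valid R B (ψ.imp φ) :=
  fun _ hBC _ => h.mono hR hBC

theorem Valid.imp_distrib {φ ψ χ : Form A} {B : Base} (h : Valid R B (φ.imp (ψ.imp χ))) :
    Valid R B ((φ.imp ψ).imp (φ.imp χ)) :=
  fun _ hBC hφψ D hCD hφ => (h D (hBC.trans hCD) hφ).mp (hφψ D hCD hφ)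

theorem Valid.contrapose (hR : ∀ a, S5Rel (R a)) {φ ψ : Form A} {B : Base}
    (h : Valid R B (φ.neg.imp ψ.neg)) : Valid R B (ψ.imp φ) :=
  fun _ hBC hψ => Valid.of_neg_neg hR fun D hCD hnφ =>
    (h D (hBC.trans hCD) hnφ).mp (hψ.mono hR hCD)

theorem Valid.K_imp (hR : ∀ a, S5Rel (R a)) {a : A} {φ ψ : Form A} {B : Base}
    (h : Valid R B (Form.K a (φ.imp ψ))) : Valid R B ((Form.K a φ).imp (Form.K a ψ)) :=
  fun _ hBC hKφ E hCE => (h.mono hR hBC E hCE).mp (hKφ E hCE)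

theorem Valid.of_K {a : A} (hr : S5Rel (R a)) {φ : Form A} {B : Base}
    (h : Valid R B (Form.K a φ)) : Valid R B φ :=
  h B (hr.refl B)

theorem Valid.K_K {a : A} (hr : S5Rel (R a)) {φ : Form A} {B : Base}
    (h : Valid R B (Form.K a φ)) : Valid R B (Form.K a (Form.K a φ)) :=
  fun _ hBC _ hCD => h _ (hr.trans _ _ _ hBC hCD)

theorem Valid.K_neg_K {a : A} (hr : S5Rel (R a)) {φ : Form A} {B : Base}
    (h : Valid R B (Form.K a φ).neg) : Valid R B (Form.K a (Form.K a φ).neg) :=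
  fun _ hBC E hCE hKφ => Valid.neg_K_of_rel hr hBC h E hCE (hKφ.K_K hr)

end Validity

/-- Completeness: every theorem of the S5 Hilbert system is valid in the
base-extension semantics. -/
theorem stmt17 {A : Type} (φ : Form A) (h : Prov φ) : ValidAll φ := by
  intro R hR
  induction h with
  | ax1 => exact Valid.imp_of_entails fun _ => Valid.imp_intro hR
  | ax2 => exact Valid.imp_of_entails fun _ => Valid.imp_distrib
  | ax3 => exact Valid.imp_of_entails fun _ => Valid.contrapose hR
  | axK => exact Valid.imp_of_entails fun _ => Valid.K_imp hR
  | axT a => exact Valid.imp_of_entails fun _ => Valid.of_K (hR a)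
  | ax4 a => exact Valid.imp_of_entails fun _ => Valid.K_K (hR a)
  | ax5 a => exact Valid.imp_of_entails fun _ => Valid.K_neg_K (hR a)
  | mp _ _ ihφψ ihφ => exact fun B => (ihφψ B).mp (ihφ B)
  | nec _ _ ih => exact fun _ C _ => ih C
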